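/- Let F be a finite field of order q = 2^e with e ≥ 2, let δ ∈ F satisfy x² + x ≠ δ for all x ∈ F, and let a0, a1, b1 ∈ F with (a0, a1) ≠ (0, 0). Then the set of pairs (μ0, μ1) ∈ F² satisfying the system: (a0+a1)μ1² + (a1+b1)(1+μ0²) + δ(a1+b1)μ1² + b1μ0μ1 = 0, (a0+a1)(1+μ0²+μ1²) + (a1+b1)δ²μ1² + δ(a1+b1)(1+μ0²+μ1²) + δb1μ1(μ0+μ1) = 0, and 1 + μ0² + δμ1² + μ0μ1 = 0, is exactly {(1, 0)}. -/

import Mathlib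

/-!
In characteristic 2 the third equation is `N(μ0, μ1) = 1` for the norm form
`N(x, y) = x² + xy + δy²` of the quadratic extension defined by `δ`, and modulo it the first two
equations become `μ1 L₁ = 0` and `μ1 L₂ = 0` for two linear forms `L₁, L₂` in `(μ0, μ1)`.
The determinant of `(L₁, L₂)` is `N(a0, a1)`, which is nonzero because `N` is anisotropic, so
`μ1 ≠ 0` would force `μ1 = 0`. Hence `μ1 = 0`, and then `N(μ0, 0) = μ0² = 1` gives `μ0 = 1`.
-/

variable {F : Type*} [Field F]

theorem two_eq_zero_of_card_eq_two_pow [Fintype F] {e : ℕ} (hF : Fintype.card F = 2 ^ e) :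
    (2 : F) = 0 :=
  eq_zero_of_pow_eq_zero (n := e) (by exact_mod_cast hF ▸ FiniteField.cast_card_eq_zero F)

theorem sq_add_mul_add_mul_sq_ne_zero {δ : F} (hδ : ∀ x : F, x ^ 2 + x + δ ≠ 0) {a b : F}
    (hab : (a, b) ≠ (0, 0)) : a ^ 2 + a * b + δ * b ^ 2 ≠ 0 := by
  intro h
  by_cases hb : b = 0
  · subst hb
    exact hab (by simpa using h)
  · exact hδ (a / b) (by field_simp; linear_combination h)

theorem snd_eq_zero_of_spread_line_equations (two_eq_zero : (2 : F) = 0) {δ a0 a1 b1 μ0 μ1 : F}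
    (hN : a0 ^ 2 + a0 * a1 + δ * a1 ^ 2 ≠ 0)
    (h1 : (a0 + a1) * μ1 ^ 2 + (a1 + b1) * (1 + μ0 ^ 2)
      + δ * (a1 + b1) * μ1 ^ 2 + b1 * μ0 * μ1 = 0)
    (h2 : (a0 + a1) * (1 + μ0 ^ 2 + μ1 ^ 2) + (a1 + b1) * δ ^ 2 * μ1 ^ 2
      + δ * (a1 + b1) * (1 + μ0 ^ 2 + μ1 ^ 2) + δ * b1 * μ1 * (μ0 + μ1) = 0)
    (h3 : 1 + μ0 ^ 2 + δ * μ1 ^ 2 + μ0 * μ1 = 0) :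
    μ1 = 0 := by
  have E1 : μ1 * ((a0 + a1) * μ1 + a1 * μ0) = 0 := by
    linear_combination h1 + (a1 + b1) * h3 -
      ((a1 + b1) * (1 + μ0 ^ 2) + δ * (a1 + b1) * μ1 ^ 2 + b1 * μ0 * μ1) * two_eq_zero
  have E2 : μ1 * ((a0 + a1) * δ * μ1 + (a0 + a1) * μ0 + (a0 + a1) * μ1
      + δ * a1 * μ0 + δ * a1 * μ1) = 0 := by
    linear_combination h2 + ((a0 + a1) + δ * (a1 + b1)) * h3 -
      (((a0 + a1) + δ * (a1 + b1)) * (1 + μ0 ^ 2)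
        + (δ ^ 2 * (a1 + b1) + δ * b1) * μ1 ^ 2 + δ * b1 * μ0 * μ1) * two_eq_zero
  -- Cramer's rule for the linear forms in `E1` and `E2`, whose determinant is the norm in `hN`.
  have hdet : μ1 ^ 2 * (a0 ^ 2 + a0 * a1 + δ * a1 ^ 2) = 0 := by
    linear_combination a1 * E2 - (a1 * (δ + 1) + a0) * E1
      + μ1 ^ 2 * (a0 ^ 2 + a0 * a1) * two_eq_zero
  exact eq_zero_of_pow_eq_zero ((mul_eq_zero.mp hdet).resolve_right hN)

theorem stmt_10_general (e : ℕ)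
    (F : Type) [Field F] [Fintype F] (hF : Fintype.card F = 2 ^ e)
    (δ : F) (hδ : ∀ x : F, x ^ 2 + x ≠ δ)
    (a0 a1 b1 : F) (ha : (a0, a1) ≠ (0, 0)) :
    {p : F × F |
        (a0 + a1) * p.2 ^ 2 + (a1 + b1) * (1 + p.1 ^ 2)
            + δ * (a1 + b1) * p.2 ^ 2 + b1 * p.1 * p.2 = 0
        ∧ (a0 + a1) * (1 + p.1 ^ 2 + p.2 ^ 2) + (a1 + b1) * δ ^ 2 * p.2 ^ 2
            + δ * (a1 + b1) * (1 + p.1 ^ 2 + p.2 ^ 2)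
            + δ * b1 * p.2 * (p.1 + p.2) = 0
        ∧ 1 + p.1 ^ 2 + δ * p.2 ^ 2 + p.1 * p.2 = 0}
      = {((1 : F), (0 : F))} := by
  have two_eq_zero := two_eq_zero_of_card_eq_two_pow hF
  have hN : a0 ^ 2 + a0 * a1 + δ * a1 ^ 2 ≠ 0 :=
    sq_add_mul_add_mul_sq_ne_zero
      (fun x hx ↦ hδ x (by linear_combination hx - δ * two_eq_zero)) ha
  ext ⟨μ0, μ1⟩
  simp only [Set.mem_ofPred_eq, Set.mem_singleton_iff, Prod.mk.injEq]
  constructor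
  · rintro ⟨h1, h2, h3⟩
    obtain rfl := snd_eq_zero_of_spread_line_equations two_eq_zero hN h1 h2 h3
    have hsq : (μ0 + 1) ^ 2 = 0 := by linear_combination h3 + μ0 * two_eq_zero
    exact ⟨by linear_combination eq_zero_of_pow_eq_zero hsq - two_eq_zero, rfl⟩
  · rintro ⟨rfl, rfl⟩
    refine ⟨?_, ?_, ?_⟩
    · linear_combination (a1 + b1) * two_eq_zero
    · linear_combination ((a0 + a1) + δ * (a1 + b1)) * two_eq_zero
    · linear_combination two_eq_zero

/-- The system expressing that the spread line `r(0,1,μ0+εμ1,t)` is contained in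
the BC cone `B'` of a BM variety, `q` even: its solution set is `{(1, 0)}`. -/
theorem stmt_10 (e : ℕ) (he : 2 ≤ e)
    (F : Type) [Field F] [Fintype F] (hF : Fintype.card F = 2 ^ e)
    (δ : F) (hδ : ∀ x : F, x ^ 2 + x ≠ δ)
    (a0 a1 b1 : F) (ha : (a0, a1) ≠ (0, 0)) :
    {p : F × F |
        (a0 + a1) * p.2 ^ 2 + (a1 + b1) * (1 + p.1 ^ 2)
            + δ * (a1 + b1) * p.2 ^ 2 + b1 * p.1 * p.2 = 0
        ∧ (a0 + a1) * (1 + p.1 ^ 2 + p.2 ^ 2) + (a1 + b1) * δ ^ 2 * p.2 ^ 2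
            + δ * (a1 + b1) * (1 + p.1 ^ 2 + p.2 ^ 2)
            + δ * b1 * p.2 * (p.1 + p.2) = 0
        ∧ 1 + p.1 ^ 2 + δ * p.2 ^ 2 + p.1 * p.2 = 0}
      = {((1 : F), (0 : F))} :=
  stmt_10_general e F hF δ hδ a0 a1 b1 ha
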